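/- arXiv:1305.6659 — 5 statements merged into one kernel-verified Lean document; each statement's English description precedes it below -/
import Mathlib

section
/- For the revived-cluster posterior mean θ_post(σ) = (1/(τσΔt + σ/w) + n/σ)^{-1}·(θ'/(τσΔt + σ/w) + (Σ_i y_i)/σ) with fixed w > 0, τ ≥ 0, Δt ≥ 0, n ≥ 1, θ' ∈ R^d, the limit as σ → 0⁺ equals (θ'·γ + n·m)/(γ + n), where γ = (w^{-1} + Δt·τ)^{-1} and m = (Σ_i y_i)/n. -/
open Filter Topology

/-!
Both variances, `τσΔt + σ/w` of the propagated estimate and `σ` of the observations, are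
linear in `σ`, and a precision-weighted mean does not change when all precisions are
multiplied by a common factor. So the posterior mean is the same for every `σ > 0`, and the
limit is that constant value.
-/

theorem precision_weighted_mean_scale_variances {K E : Type*} [Field K] [AddCommGroup E]
    [Module K E] {σ : K} (hσ : σ ≠ 0) (v n : K) (x S : E) :
    ((σ * v)⁻¹ + n / σ)⁻¹ • ((σ * v)⁻¹ • x + σ⁻¹ • S) = (v⁻¹ + n)⁻¹ • (v⁻¹ • x + S) := by
  have hprec : (σ * v)⁻¹ + n / σ = σ⁻¹ * (v⁻¹ + n) := by ring
  have hmean : (σ * v)⁻¹ • x + σ⁻¹ • S = σ⁻¹ • (v⁻¹ • x + S) := by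
    rw [smul_add, smul_smul, mul_inv]
  rw [hprec, hmean, smul_smul, mul_inv, inv_inv, mul_right_comm, mul_inv_cancel₀ hσ, one_mul]

theorem natCast_smul_inv_natCast_smul_sum {K E : Type*} [DivisionRing K] [CharZero K]
    [AddCommGroup E] [Module K E] {n : ℕ} (x : Fin n → E) :
    (n : K) • (n : K)⁻¹ • ∑ i, x i = ∑ i, x i := by
  rcases n with _ | n
  · simp
  · rw [smul_smul, mul_inv_cancel₀ (Nat.cast_ne_zero.mpr n.succ_ne_zero), one_smul]

theorem revived_posterior_mean_limit_general {d n : ℕ}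
    (w τ Δt : ℝ)
    (θ' : EuclideanSpace ℝ (Fin d)) (y : Fin n → EuclideanSpace ℝ (Fin d)) :
    Tendsto (fun σ : ℝ =>
        ((τ * σ * Δt + σ / w)⁻¹ + (n : ℝ) / σ)⁻¹ •
          ((τ * σ * Δt + σ / w)⁻¹ • θ' + σ⁻¹ • ∑ i : Fin n, y i))
      (𝓝[>] 0)
      (𝓝 (((w⁻¹ + Δt * τ)⁻¹ + (n : ℝ))⁻¹ •
        ((w⁻¹ + Δt * τ)⁻¹ • θ' +
          (n : ℝ) • ((n : ℝ)⁻¹ • ∑ i : Fin n, y i)))) := by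
  refine tendsto_const_nhds.congr' ?_
  filter_upwards [self_mem_nhdsWithin] with σ (hσ : 0 < σ)
  rw [show τ * σ * Δt + σ / w = σ * (w⁻¹ + Δt * τ) by ring,
    precision_weighted_mean_scale_variances hσ.ne', natCast_smul_inv_natCast_smul_sum]

/-- Low-variance limit of the revived-cluster posterior mean: with transition
noise ξ = τσ per time step, previous-estimate variance σ' = σ/w, Δt elapsed
time steps, and n new observations, the posterior mean converges as σ → 0⁺ to
(θ'·γ + n·m)/(γ + n) with γ = (w⁻¹ + Δt·τ)⁻¹ and m the sample mean. -/
theorem revived_posterior_mean_limit {d n : ℕ} (hn : 1 ≤ n)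
    (w τ Δt : ℝ) (hw : 0 < w) (hτ : 0 ≤ τ) (hΔt : 0 ≤ Δt)
    (θ' : EuclideanSpace ℝ (Fin d)) (y : Fin n → EuclideanSpace ℝ (Fin d)) :
    Tendsto (fun σ : ℝ =>
        ((τ * σ * Δt + σ / w)⁻¹ + (n : ℝ) / σ)⁻¹ •
          ((τ * σ * Δt + σ / w)⁻¹ • θ' + σ⁻¹ • ∑ i : Fin n, y i))
      (𝓝[>] 0)
      (𝓝 (((w⁻¹ + Δt * τ)⁻¹ + (n : ℝ))⁻¹ •
        ((w⁻¹ + Δt * τ)⁻¹ • θ' +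
          (n : ℝ) • ((n : ℝ)⁻¹ • ∑ i : Fin n, y i)))) :=
  revived_posterior_mean_limit_general w τ Δt θ' y
end

section
/- Consider the three quantities p_new(σ) = α(σ)·(2π(σ+ρ))^{-d/2}·exp(-a/(2(σ+ρ))), p_inst(σ) = c·(2πσ)^{-d/2}·exp(-b/(2σ)), with α(σ) = (1+ρ/σ)^{d/2}·exp(-λ/(2σ)), c > 0, ρ > 0, a, b ≥ 0. Then lim_{σ→0⁺} p_new(σ)/p_inst(σ) = ∞ if λ < b, and = 0 if λ > b (when a < λ, the cross terms vanish appropriately); in particular, the maximizer of the assignment probabilities in the σ → 0⁺ limit is the new cluster if and only if λ < b. -/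
open Filter Topology Real

/-!
The factor `(1 + ρ/σ)^{d/2}` in `α(σ)` exactly cancels the change of normalising constant from
`(2π(σ+ρ))^{-d/2}` to `(2πσ)^{-d/2}`, so for `σ > 0` the ratio is
`exp ((b - λ) / (2σ)) · exp (-a / (2(σ+ρ))) / c`. The second factor has a positive finite limit
as `σ → 0⁺`, and the first tends to `∞` or `0` according to the sign of `b - λ`.
-/

lemma div_rpow_mul_mul_rpow_neg {k x y : ℝ} (hk : 0 ≤ k) (hx : 0 < x) (hy : 0 < y) (t : ℝ) :
    (y / x) ^ t * (k * y) ^ (-t) = (k * x) ^ (-t) := by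
  have hyx : 0 < y / x := div_pos hy hx
  rw [show k * y = k * x * (y / x) by field_simp, mul_rpow (by positivity) hyx.le,
    mul_left_comm, ← rpow_add hyx, add_neg_cancel, rpow_zero, mul_one]

lemma new_div_instantiated_eq {σ ρ : ℝ} (hσ : 0 < σ) (hρ : 0 ≤ ρ) (t lam a b c : ℝ) :
    (1 + ρ / σ) ^ t * exp (-lam / (2 * σ)) * (2 * π * (σ + ρ)) ^ (-t) *
        exp (-a / (2 * (σ + ρ))) / (c * (2 * π * σ) ^ (-t) * exp (-b / (2 * σ))) =
      exp ((b - lam) / 2 / σ) * (exp (-a / (2 * (σ + ρ))) / c) := by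
  have hexp : exp ((b - lam) / 2 / σ) = exp (-lam / (2 * σ)) / exp (-b / (2 * σ)) := by
    rw [← exp_sub]; ring_nf
  rw [one_add_div hσ.ne', ← div_rpow_mul_mul_rpow_neg (by positivity) hσ
    (by positivity : 0 < σ + ρ) t, hexp]
  field_simp

lemma tendsto_exp_div_nhdsGT_zero_atTop {κ : ℝ} (hκ : 0 < κ) :
    Tendsto (fun σ => exp (κ / σ)) (𝓝[>] 0) atTop := by
  rw [tendsto_exp_comp_atTop]
  exact (tendsto_inv_nhdsGT_zero.const_mul_atTop hκ).congr fun σ => (div_eq_mul_inv κ σ).symm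

lemma tendsto_exp_div_nhdsGT_zero_nhds_zero {κ : ℝ} (hκ : κ < 0) :
    Tendsto (fun σ => exp (κ / σ)) (𝓝[>] 0) (𝓝 0) := by
  rw [tendsto_exp_comp_nhds_zero]
  exact (tendsto_inv_nhdsGT_zero.const_mul_atTop_of_neg hκ).congr fun σ =>
    (div_eq_mul_inv κ σ).symm

theorem new_vs_instantiated_ratio_limit_general {d : ℕ}
    (ρ lam a b c : ℝ) (hρ : 0 < ρ) (hc : 0 < c) :
    let pnew : ℝ → ℝ := fun σ =>
      ((1 + ρ / σ) ^ ((d : ℝ) / 2) * Real.exp (-lam / (2 * σ))) *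
        (2 * π * (σ + ρ)) ^ (-(d : ℝ) / 2) * Real.exp (-a / (2 * (σ + ρ)))
    let pinst : ℝ → ℝ := fun σ =>
      c * (2 * π * σ) ^ (-(d : ℝ) / 2) * Real.exp (-b / (2 * σ))
    (lam < b → Tendsto (fun σ => pnew σ / pinst σ) (𝓝[>] 0) atTop) ∧
    (b < lam → Tendsto (fun σ => pnew σ / pinst σ) (𝓝[>] 0) (𝓝 0)) := by
  intro pnew pinst
  have hratio : (fun σ => pnew σ / pinst σ) =ᶠ[𝓝[>] 0]
      fun σ => exp ((b - lam) / 2 / σ) * (exp (-a / (2 * (σ + ρ))) / c) := by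
    filter_upwards [self_mem_nhdsWithin] with σ (hσ : 0 < σ)
    simpa only [pnew, pinst, neg_div] using new_div_instantiated_eq hσ hρ.le _ lam a b c
  have hfactor : Tendsto (fun σ => exp (-a / (2 * (σ + ρ))) / c) (𝓝[>] 0)
      (𝓝 (exp (-a / (2 * ρ)) / c)) := by
    have hcont : ContinuousAt (fun σ => exp (-a / (2 * (σ + ρ))) / c) 0 := by
      fun_prop (disch := positivity)
    simpa using hcont.tendsto.mono_left nhdsWithin_le_nhds
  constructor
  · intro hlt
    exact ((tendsto_exp_div_nhdsGT_zero_atTop (by linarith)).atTop_mul_pos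
      (by positivity) hfactor).congr' hratio.symm
  · intro hlt
    simpa using ((tendsto_exp_div_nhdsGT_zero_nhds_zero (by linarith)).mul hfactor).congr'
      hratio.symm

/-- Asymptotics of the ratio of the unnormalized Gibbs assignment weights for a
new cluster, p_new(σ) = α(σ)·(2π(σ+ρ))^{-d/2}·exp(-a/(2(σ+ρ))) with
α(σ) = (1+ρ/σ)^{d/2}·exp(-λ/(2σ)), versus an instantiated cluster,
p_inst(σ) = c·(2πσ)^{-d/2}·exp(-b/(2σ)): as σ → 0⁺ the ratio tends to ∞ if
λ < b and to 0 if λ > b; in particular in the limit the new cluster wins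
(has larger weight) iff λ < b. -/
theorem new_vs_instantiated_ratio_limit {d : ℕ} (hd : 1 ≤ d)
    (ρ lam a b c : ℝ) (hρ : 0 < ρ) (hc : 0 < c) (ha : 0 ≤ a) (hb : 0 ≤ b)
    (halam : a < lam) :
    let pnew : ℝ → ℝ := fun σ =>
      ((1 + ρ / σ) ^ ((d : ℝ) / 2) * Real.exp (-lam / (2 * σ))) *
        (2 * π * (σ + ρ)) ^ (-(d : ℝ) / 2) * Real.exp (-a / (2 * (σ + ρ)))
    let pinst : ℝ → ℝ := fun σ =>
      c * (2 * π * σ) ^ (-(d : ℝ) / 2) * Real.exp (-b / (2 * σ))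
    (lam < b → Tendsto (fun σ => pnew σ / pinst σ) (𝓝[>] 0) atTop) ∧
    (b < lam → Tendsto (fun σ => pnew σ / pinst σ) (𝓝[>] 0) (𝓝 0)) :=
  new_vs_instantiated_ratio_limit_general ρ lam a b c hρ hc
end

section
/- Let h(σ) = exp(-QΔt/(2σ))·c·(2π(σ + τσΔt))^{-d/2}·exp(-r/(2(σ + τσΔt))) for c > 0, Q > 0, τ ≥ 0, Δt ≥ 1, r ≥ 0. Then lim_{σ→0⁺} (-2σ·log h(σ)) = QΔt + r/(τΔt + 1). -/
open Filter Topology Real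

lemma tendsto_mul_log_zero : Tendsto (fun x : ℝ => x * Real.log x) (𝓝[>] 0) (𝓝 0) := by
  have h := Real.continuous_mul_log.tendsto 0
  simpa using h.mono_left nhdsWithin_le_nhds

/-- The rescaled negative log of the unnormalized Gibbs weight for reviving an
old cluster, h(σ) = exp(-QΔt/(2σ))·c·(2π(σ+τσΔt))^{-d/2}·exp(-r/(2(σ+τσΔt))),
converges as σ → 0⁺ to the old-cluster cost QΔt + r/(τΔt + 1). -/
theorem rescaled_neg_log_old_cluster_cost {d : ℕ} (hd : 1 ≤ d)
    (c Q τ r : ℝ) (Δt : ℕ) (hc : 0 < c) (hQ : 0 < Q) (hτ : 0 ≤ τ)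
    (hΔt : 1 ≤ Δt) (hr : 0 ≤ r) :
    Tendsto (fun σ : ℝ =>
        -2 * σ * Real.log (Real.exp (-(Q * (Δt : ℝ)) / (2 * σ)) * c *
          (2 * π * (σ + τ * σ * (Δt : ℝ))) ^ (-(d : ℝ) / 2) *
          Real.exp (-r / (2 * (σ + τ * σ * (Δt : ℝ))))))
      (𝓝[>] 0) (𝓝 (Q * (Δt : ℝ) + r / (τ * (Δt : ℝ) + 1))) := by
  set A : ℝ := τ * (Δt : ℝ) + 1 with hA
  have hApos : 0 < A := by positivity
  -- target function
  have key : ∀ σ : ℝ, 0 < σ →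
      -2 * σ * Real.log (Real.exp (-(Q * (Δt : ℝ)) / (2 * σ)) * c *
          (2 * π * (σ + τ * σ * (Δt : ℝ))) ^ (-(d : ℝ) / 2) *
          Real.exp (-r / (2 * (σ + τ * σ * (Δt : ℝ)))))
      = Q * (Δt : ℝ) + r / A - 2 * σ * Real.log c
        + (d : ℝ) * (σ * Real.log (2 * π * A) + σ * Real.log σ) := by
    intro σ hσ
    have hσA : σ + τ * σ * (Δt : ℝ) = σ * A := by ring
    have hσApos : 0 < σ * A := mul_pos hσ hApos
    have hbase : (0:ℝ) < 2 * π * (σ * A) := by positivity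
    rw [hσA]
    rw [Real.log_mul (by positivity) (Real.exp_ne_zero _),
        Real.log_mul (by positivity) (by positivity),
        Real.log_mul (Real.exp_ne_zero _) (ne_of_gt hc),
        Real.log_exp, Real.log_exp, Real.log_rpow hbase,
        Real.log_mul (by positivity) (ne_of_gt hσApos),
        Real.log_mul (ne_of_gt hσ) (ne_of_gt hApos),
        Real.log_mul (by positivity : (2:ℝ) * π ≠ 0) (ne_of_gt hApos)]
    have h2σ : (2:ℝ) * σ ≠ 0 := by positivity
    field_simp
    ring
  have heq : (fun σ : ℝ =>
      -2 * σ * Real.log (Real.exp (-(Q * (Δt : ℝ)) / (2 * σ)) * c *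
          (2 * π * (σ + τ * σ * (Δt : ℝ))) ^ (-(d : ℝ) / 2) *
          Real.exp (-r / (2 * (σ + τ * σ * (Δt : ℝ))))))
      =ᶠ[𝓝[>] 0] (fun σ : ℝ => Q * (Δt : ℝ) + r / A - 2 * σ * Real.log c
        + (d : ℝ) * (σ * Real.log (2 * π * A) + σ * Real.log σ)) := by
    filter_upwards [self_mem_nhdsWithin] with σ hσ
    exact key σ hσ
  rw [Filter.tendsto_congr' heq]
  have hσ0 : Tendsto (fun σ : ℝ => σ) (𝓝[>] 0) (𝓝 0) :=
    tendsto_id.mono_left nhdsWithin_le_nhds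
  have h1 : Tendsto (fun σ : ℝ => Q * (Δt : ℝ) + r / A - 2 * σ * Real.log c
        + (d : ℝ) * (σ * Real.log (2 * π * A) + σ * Real.log σ)) (𝓝[>] 0)
      (𝓝 (Q * (Δt : ℝ) + r / A - 2 * 0 * Real.log c
        + (d : ℝ) * (0 * Real.log (2 * π * A) + 0))) := by
    refine Tendsto.add (Tendsto.sub tendsto_const_nhds ?_) (Tendsto.const_mul _
      (Tendsto.add ?_ tendsto_mul_log_zero))
    · exact ((tendsto_const_nhds.mul hσ0).mul tendsto_const_nhds).congr (fun x => by ring)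
    · exact hσ0.mul tendsto_const_nhds
  simpa using h1
end

section
/- Under the reparameterization Q = λ/N_Q and τ = (N_Q(k_τ - 1) + 1)/(N_Q - 1), with N_Q > 1 and k_τ ≥ 1: (i) if Δt ≥ N_Q then the old-cluster revival cost QΔt + r/(τΔt + 1) exceeds or equals λ for every r ≥ 0, so an old cluster unobserved for at least N_Q time steps is never revived in preference to a new cluster; (ii) for Δt = 1, the revival cost Q + r/(τ + 1) is at most λ if and only if r ≤ k_τ·λ. -/
/-- The reparameterization Q = λ/N_Q, τ = (N_Q(k_τ - 1) + 1)/(N_Q - 1), with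
N_Q > 1 and k_τ ≥ 1:
(i) if Δt ≥ N_Q then the revival cost QΔt + r/(τΔt + 1) is at least λ for
every r ≥ 0 (a cluster unobserved for ≥ N_Q steps is never revived in
preference to a new cluster);
(ii) for Δt = 1, the revival cost Q + r/(τ + 1) is at most λ iff r ≤ k_τ·λ. -/
theorem reparameterization_behavior
    (lam NQ kτ : ℝ) (hlam : 0 < lam) (hNQ : 1 < NQ) (hkτ : 1 ≤ kτ) :
    let Q : ℝ := lam / NQ
    let τ : ℝ := (NQ * (kτ - 1) + 1) / (NQ - 1)
    (∀ Δt : ℝ, NQ ≤ Δt → ∀ r : ℝ, 0 ≤ r → lam ≤ Q * Δt + r / (τ * Δt + 1)) ∧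
    (∀ r : ℝ, 0 ≤ r → (Q + r / (τ + 1) ≤ lam ↔ r ≤ kτ * lam)) := by
  intro Q τ
  have hNQ0 : (0:ℝ) < NQ := lt_trans one_pos hNQ
  have hden : (0:ℝ) < NQ - 1 := by linarith
  have hτ : 0 < τ := by
    have hnum : (0:ℝ) < NQ * (kτ - 1) + 1 := by nlinarith
    exact div_pos hnum hden
  constructor
  · intro Δt hΔ r hr
    have hΔ0 : 0 < Δt := lt_of_lt_of_le hNQ0 hΔ
    have h1 : lam ≤ Q * Δt := by
      have : lam * NQ ≤ lam * Δt := by nlinarith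
      rw [show Q * Δt = lam * Δt / NQ by rw [div_mul_eq_mul_div]]
      rw [le_div_iff₀ hNQ0]
      linarith
    have h2 : 0 ≤ r / (τ * Δt + 1) := div_nonneg hr (by nlinarith)
    linarith
  · intro r hr
    have hτ1 : 0 < τ + 1 := by linarith
    have key : (lam - Q) * (τ + 1) = kτ * lam := by
      show (lam - lam / NQ) * ((NQ * (kτ - 1) + 1) / (NQ - 1) + 1) = kτ * lam
      field_simp
      ring
    constructor
    · intro h
      have : r / (τ + 1) ≤ lam - Q := by linarith
      have := (div_le_iff₀ hτ1).mp this
      linarith [key]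
    · intro h
      have : r ≤ (lam - Q) * (τ + 1) := by linarith [key]
      have := (div_le_iff₀ hτ1).mpr this
      linarith
end

section
/- Let λ > 0 and suppose every pairwise squared distance among the observations y_1,...,y_N ∈ R^d exceeds 4λ, there are no old clusters, and initially no clusters are instantiated. Then at any fixed point of the Dynamic Means inner loop (each label is a cost-minimizing choice given parameters, each parameter is the mean of its assigned points), every observation is in its own singleton cluster, and the cost is N·λ. -/
open Finset

/-- Well-separated data yields singleton clusters: if λ > 0, every pairwise
squared distance among y₁,…,y_N exceeds 4λ, and there are no old clusters,
then at any fixed point of the Dynamic Means inner loop — each parameter θ_k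
is the mean of its assigned points, and each label is cost-minimizing, i.e.
‖y_i - θ_{z(i)}‖² ≤ λ (else a new cluster would be cheaper) and
‖y_i - θ_{z(i)}‖² ≤ ‖y_i - θ_k‖² for every occupied cluster k — every
observation is in its own singleton cluster and the cost is N·λ. -/
theorem well_separated_fixed_point_singletons {d N : ℕ}
    (lam : ℝ) (hlam : 0 < lam)
    (y : Fin N → EuclideanSpace ℝ (Fin d))
    (hsep : ∀ i j : Fin N, i ≠ j → 4 * lam < ‖y i - y j‖ ^ 2)
    (z : Fin N → ℕ) (θ : ℕ → EuclideanSpace ℝ (Fin d))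
    (hmean : ∀ k ∈ Finset.univ.image z,
      θ k = ((Finset.univ.filter fun i => z i = k).card : ℝ)⁻¹ •
        ∑ i ∈ Finset.univ.filter fun i => z i = k, y i)
    (hopt_new : ∀ i : Fin N, ‖y i - θ (z i)‖ ^ 2 ≤ lam)
    (hopt_inst : ∀ i : Fin N, ∀ k ∈ Finset.univ.image z,
      ‖y i - θ (z i)‖ ^ 2 ≤ ‖y i - θ k‖ ^ 2) :
    Function.Injective z ∧
    lam * ((Finset.univ.image z).card : ℝ) +
      ∑ i : Fin N, ‖y i - θ (z i)‖ ^ 2 = (N : ℝ) * lam := by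
  have hsq : ∀ i : Fin N, ‖y i - θ (z i)‖ ≤ Real.sqrt lam := by
    intro i
    have h := hopt_new i
    have := Real.sqrt_le_sqrt h
    rwa [Real.sqrt_sq (norm_nonneg _)] at this
  have hinj : Function.Injective z := by
    intro i j hij
    by_contra hne
    have hlt := hsep i j hne
    have : ‖y i - y j‖ ≤ 2 * Real.sqrt lam := by
      calc ‖y i - y j‖ ≤ ‖y i - θ (z j)‖ + ‖y j - θ (z j)‖ := by
            have := norm_sub_le_norm_sub_add_norm_sub (y i) (θ (z j)) (y j)
            rwa [norm_sub_rev (θ (z j))] at this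
        _ ≤ Real.sqrt lam + Real.sqrt lam := by
            rw [← hij]
            exact add_le_add (hsq i) (by rw [hij]; exact hsq j)
        _ = 2 * Real.sqrt lam := by ring
    have h4 : ‖y i - y j‖ ^ 2 ≤ 4 * lam := by
      have h2 : (0:ℝ) ≤ 2 * Real.sqrt lam := by positivity
      calc ‖y i - y j‖ ^ 2 ≤ (2 * Real.sqrt lam) ^ 2 :=
            pow_le_pow_left₀ (norm_nonneg _) this 2
        _ = 4 * lam := by
            rw [mul_pow, Real.sq_sqrt hlam.le]; ring
    linarith
  refine ⟨hinj, ?_⟩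
  have hfix : ∀ i : Fin N, θ (z i) = y i := by
    intro i
    have hfilter : (Finset.univ.filter fun j => z j = z i) = {i} := by
      ext j
      simp only [mem_filter, mem_univ, true_and, mem_singleton]
      exact ⟨fun h => hinj h, fun h => by rw [h]⟩
    have := hmean (z i) (mem_image_of_mem z (mem_univ i))
    rw [hfilter] at this
    simpa using this
  have hsum : ∑ i : Fin N, ‖y i - θ (z i)‖ ^ 2 = 0 := by
    apply Finset.sum_eq_zero
    intro i _
    rw [hfix i, sub_self, norm_zero]
    ring
  rw [hsum, Finset.card_image_of_injective _ hinj, Finset.card_univ,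
    Fintype.card_fin]
  ring
end
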